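/- For an arbitrary graph E and cardinal λ, every injective semigroup homomorphism f : G(E) → P_λ is a topological embedding of (G(E), τ_{F_cf}) into (P_λ, τ_{F_cf}): f is continuous and open onto its image. -/

import Mathlib

universe u

/-- A directed graph. -/
structure DiGraph : Type (u + 1) where
  V : Type u
  E : Type u
  s : E → V
  r : E → V

namespace DiGraph

variable (G : DiGraph.{u})

/-- A list of edges forms a valid path starting at vertex `v`. -/
def Valid (v : G.V) : List G.E → Prop
  | [] => True
  | e :: l => G.s e = v ∧ Valid (G.r e) l

/-- the endpoint of a list of edges starting at `v`. -/
def dst (v : G.V) : List G.E → G.V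
  | [] => v
  | e :: l => dst (G.r e) l

variable {G}

lemma dst_append (v : G.V) (l₁ l₂ : List G.E) :
    G.dst v (l₁ ++ l₂) = G.dst (G.dst v l₁) l₂ := by
  induction l₁ generalizing v with
  | nil => rfl
  | cons e t ih => simp [dst, ih]

lemma valid_append (v : G.V) (l₁ l₂ : List G.E) :
    G.Valid v (l₁ ++ l₂) ↔ G.Valid v l₁ ∧ G.Valid (G.dst v l₁) l₂ := by
  induction l₁ generalizing v with
  | nil => simp [Valid, dst]
  | cons e t ih => simp [Valid, dst, ih, and_assoc]

variable (G) in
/-- A (finite, directed) path in `G`: a source vertex together with a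
composable list of edges.  Paths of length zero are the vertices. -/
structure GPath : Type u where
  src : G.V
  edges : List G.E
  valid : G.Valid src edges

/-- The range (end vertex) of a path. -/
def GPath.rng (p : G.GPath) : G.V := G.dst p.src p.edges

/-- Concatenation of composable paths. -/
def GPath.comp (p q : G.GPath) (h : p.rng = q.src) : G.GPath :=
  ⟨p.src, p.edges ++ q.edges, by
    rw [valid_append]
    exact ⟨p.valid, by rw [show G.dst p.src p.edges = q.src from h]; exact q.valid⟩⟩

lemma GPath.comp_rng (p q : G.GPath) (h : p.rng = q.src) : (p.comp q h).rng = q.rng := by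
  show G.dst p.src (p.edges ++ q.edges) = _
  rw [dst_append, show G.dst p.src p.edges = q.src from h]; rfl

/-- If `p` is a prefix of the path `q`, the remaining path (so that
`q = p.comp (p.strip q _ _)`). -/
def GPath.strip (p q : G.GPath) (hs : p.src = q.src) (hp : p.edges <+: q.edges) : G.GPath :=
  ⟨p.rng, q.edges.drop p.edges.length, by
    obtain ⟨t, ht⟩ := hp
    have h1 : p.edges ++ q.edges.drop p.edges.length = q.edges := by
      rw [← ht, List.drop_left]
    have h2 : G.Valid p.src (p.edges ++ q.edges.drop p.edges.length) := by
      rw [h1, hs]; exact q.valid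
    exact ((valid_append _ _ _).mp h2).2⟩

lemma GPath.strip_rng (p q : G.GPath) (hs : p.src = q.src) (hp : p.edges <+: q.edges) :
    (p.strip q hs hp).rng = q.rng := by
  show G.dst p.rng (q.edges.drop p.edges.length) = G.dst q.src q.edges
  obtain ⟨t, ht⟩ := hp
  have h1 : p.edges ++ q.edges.drop p.edges.length = q.edges := by
    rw [← ht, List.drop_left]
  conv_rhs => rw [← hs, ← h1]
  rw [dst_append]; rfl

variable (G) in
/-- A nonzero element `a b⁻¹` of the graph inverse semigroup: a pair of
paths with the same range. -/
structure NZ : Type u where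
  a : G.GPath
  b : G.GPath
  h : a.rng = b.rng

/-- The graph inverse semigroup `G(E)` over a directed graph, in normal form:
the elements `a b⁻¹` with `r(a) = r(b)`, together with a zero element. -/
def GIS (G : DiGraph.{u}) : Type u := Option (NZ G)

instance : Zero (GIS G) := ⟨none⟩

open scoped Classical in
/-- The multiplication of the graph inverse semigroup:
`a b⁻¹ · c d⁻¹ = a c₁ d⁻¹` if `c = b c₁`, `a (d b₁)⁻¹` if `b = c b₁`, and `0` otherwise. -/
noncomputable instance : Mul (GIS G) :=
  ⟨fun x y =>
    match x, y with
    | none, _ => none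
    | some _, none => none
    | some ⟨a, b, hab⟩, some ⟨c, d, hcd⟩ =>
      if h : b.src = c.src ∧ b.edges <+: c.edges then
        some ⟨a.comp (b.strip c h.1 h.2) hab, d, by
          exact (GPath.comp_rng _ _ _).trans ((GPath.strip_rng _ _ _ _).trans hcd)⟩
      else if h' : c.src = b.src ∧ c.edges <+: b.edges then
        some ⟨a, d.comp (c.strip b h'.1 h'.2) hcd.symm, by
          exact hab.trans ((GPath.comp_rng _ _ _).trans (GPath.strip_rng _ _ _ _)).symm⟩
      else none⟩

/-- The nonzero element `a b⁻¹` of `G(E)` determined by a pair of paths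
with the same range. -/
def GIS.nz (n : NZ G) : GIS G := some n

/-- The inversion of the graph inverse semigroup: `(u v⁻¹)⁻¹ = v u⁻¹`. -/
def GIS.inv : GIS G → GIS G
  | none => none
  | some ⟨a, b, h⟩ => some ⟨b, a, h.symm⟩

end DiGraph
namespace DiGraph

/-- The graph with one vertex and a loop for each element of `ι`. -/
def bouquet (ι : Type u) : DiGraph.{u} :=
  ⟨PUnit, ι, fun _ => PUnit.unit, fun _ => PUnit.unit⟩

/-- The polycyclic monoid `P_ι` on a set `ι` of generators, realized as the
graph inverse semigroup over the graph with one vertex and `ι` many loops. -/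
def PolyM (ι : Type u) : Type u := GIS (bouquet ι)

noncomputable instance (ι : Type u) : Mul (PolyM ι) :=
  inferInstanceAs (Mul (GIS (bouquet ι)))

instance (ι : Type u) : Zero (PolyM ι) := inferInstanceAs (Zero (GIS (bouquet ι)))

end DiGraph
namespace DiGraph

variable {G : DiGraph.{u}}

/-- membership predicate for the basic neighbourhoods of zero: all of
`a b⁻¹` with `a, b ∈ F`, together with `0`. -/
def inUF (F : Set G.GPath) : GIS G → Prop
  | none => True
  | some n => n.a ∈ F ∧ n.b ∈ F

/-- The basic neighbourhood `U_F(0) = {a b⁻¹ : a, b ∈ F} ∪ {0}` of zero. -/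
def UF (F : Set G.GPath) : Set (GIS G) := {x | inUF F x}

lemma inUF_mono {F₁ F₂ : Set G.GPath} (h : F₁ ⊆ F₂) :
    ∀ x : GIS G, inUF F₁ x → inUF F₂ x := by
  intro x hx
  cases x with
  | none => trivial
  | some n => exact ⟨h hx.1, h hx.2⟩

/-- The topology `τ_𝓕` on `G(E)` determined by a filter `𝓕` on `Path(E)`:
every nonzero element is isolated, and the sets `U_F(0)`, `F ∈ 𝓕`, form a
neighbourhood base at `0`. -/
def tauF (𝓕 : Filter G.GPath) : TopologicalSpace (GIS G) where
  IsOpen U := (0 : GIS G) ∈ U → ∃ F ∈ 𝓕, UF F ⊆ U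
  isOpen_univ := fun _ => ⟨Set.univ, Filter.univ_mem, Set.subset_univ _⟩
  isOpen_inter := fun U V hU hV h0 => by
    obtain ⟨F₁, hF₁, hs₁⟩ := hU h0.1
    obtain ⟨F₂, hF₂, hs₂⟩ := hV h0.2
    exact ⟨F₁ ∩ F₂, Filter.inter_mem hF₁ hF₂, fun x hx =>
      ⟨hs₁ (inUF_mono Set.inter_subset_left x hx),
       hs₂ (inUF_mono Set.inter_subset_right x hx)⟩⟩
  isOpen_sUnion := fun S hS h0 => by
    obtain ⟨U, hU, h0U⟩ := h0
    obtain ⟨F, hF, hs⟩ := hS U hU h0U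
    exact ⟨F, hF, hs.trans (Set.subset_sUnion_of_mem hU)⟩

/-- The prefix partial order on paths: `a ≤ b` iff `b` is a prefix of `a`. -/
def prefLE (a b : G.GPath) : Prop := b.src = a.src ∧ b.edges <+: a.edges

/-- An ideal of `(Path(E), ≤)`: a set `A` with `↓A = A`. -/
def IsIdeal (A : Set G.GPath) : Prop :=
  ∀ a b : G.GPath, prefLE a b → b ∈ A → a ∈ A

/-- A topological filter on `Path(E)`:
(i) for `F ∈ 𝓕` and paths `a, b` with `r(a) = r(b)`, the set
`F \ {bk : k ∈ Path(E), ak ∉ F}` belongs to `𝓕`;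
(ii) `𝓕` contains all cofinite subsets of `Path(E)`;
(iii) `𝓕` has a base consisting of ideals of `(Path(E), ≤)`. -/
def IsTopFilter (𝓕 : Filter G.GPath) : Prop :=
  (∀ F ∈ 𝓕, ∀ a b : G.GPath, a.rng = b.rng →
      F \ {p | ∃ (k : G.GPath) (h1 : b.rng = k.src) (h2 : a.rng = k.src),
        p = b.comp k h1 ∧ a.comp k h2 ∉ F} ∈ 𝓕) ∧
  𝓕 ≤ Filter.cofinite ∧
  (∀ F ∈ 𝓕, ∃ I ∈ 𝓕, I ⊆ F ∧ IsIdeal I)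

variable (G) in
/-- The filter `𝓕_ω` generated by the sets `U_n = {u ∈ Path(E) : |u| > n}`. -/
def Fomega : Filter G.GPath :=
  Filter.generate {S | ∃ n : ℕ, S = {u : G.GPath | n < u.edges.length}}

variable (G) in
/-- `U_n(0) = {u v⁻¹ : min{|u|,|v|} > n} ∪ {0}`. -/
def Un (n : ℕ) : Set (GIS G) := UF {u : G.GPath | n < u.edges.length}

end DiGraph

/-! If `f 0 = 0`, then `f` sends each idempotent `p p⁻¹` to an idempotent `c(p) c(p)⁻¹` of
`P_λ`, and the products `(a a⁻¹)(a b⁻¹)`, `(a b⁻¹)(b a⁻¹)`, ... force `f (a b⁻¹) = c(a) c(b)⁻¹`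
with `c` injective. Hence `f` pulls `U_F(0)` back to `U_{c⁻¹ F}(0)`, and the sets `c⁻¹ F` with
`F` cofinite are exactly the cofinite sets of paths of `E`. If `f 0 = u v⁻¹ ≠ 0`, then `f 0`
absorbs every `f x`, so `f` has finite range; `G(E)` is then finite, hence discrete, and an
injection of a finite discrete space into the T₁ space `P_λ` is an embedding. -/

lemma isEmbedding_of_injective_of_finite_range {X Y : Type*} [TopologicalSpace X]
    [DiscreteTopology X] [TopologicalSpace Y] [T1Space Y] {f : X → Y}
    (hf : Function.Injective f) (hr : (Set.range f).Finite) : Topology.IsEmbedding f :=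
  (Topology.IsClosedEmbedding.of_continuous_injective_isClosedMap continuous_of_discreteTopology hf
    fun s _ => (hr.subset (Set.image_subset_range f s)).isClosed).isEmbedding

namespace DiGraph

variable {G H : DiGraph.{u}} {ι : Type u}

lemma GPath.ext {p q : G.GPath} (hs : p.src = q.src) (he : p.edges = q.edges) : p = q := by
  cases p; cases q; cases hs; cases he; rfl

lemma NZ.ext {m n : NZ G} (ha : m.a = n.a) (hb : m.b = n.b) : m = n := by
  cases m; cases n; cases ha; cases hb; rfl

lemma bouquet_rng_eq (p q : (bouquet ι).GPath) : p.rng = q.rng := rfl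

lemma bouquet_edges_injective : Function.Injective (GPath.edges : (bouquet ι).GPath → List ι) :=
  fun _ _ h => GPath.ext rfl h

lemma finite_setOf_prefix_bouquet (l : List ι) :
    {p : (bouquet ι).GPath | p.edges <+: l}.Finite :=
  Set.Finite.preimage (s := {k | k <+: l}) bouquet_edges_injective.injOn <|
  l.inits.finite_toSet.subset fun _ hk => (List.mem_inits _ _).mpr hk

namespace GIS

lemma nz_injective : Function.Injective (nz : NZ G → GIS G) := Option.some_injective _

lemma nz_ne_zero (n : NZ G) : nz n ≠ 0 := Option.some_ne_none n

lemma zero_mul (x : GIS G) : 0 * x = 0 := rfl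

lemma mul_zero (x : GIS G) : x * 0 = 0 := by cases x <;> rfl

lemma nz_mul_nz_cancel (a b d : G.GPath) (hab : a.rng = b.rng) (hbd : b.rng = d.rng) :
    nz ⟨a, b, hab⟩ * nz ⟨b, d, hbd⟩ = nz ⟨a, d, hab.trans hbd⟩ := by
  simp only [HMul.hMul, Mul.mul, nz, List.prefix_refl, and_self, ↓reduceDIte]
  exact congrArg some (NZ.ext (GPath.ext rfl (by simp [GPath.comp, GPath.strip])) rfl)

lemma nz_mul_nz_eq_nz {x y z : NZ G} (h : nz x * nz y = nz z) :
    (x.b.edges <+: y.a.edges ∧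
      z.a.edges = x.a.edges ++ y.a.edges.drop x.b.edges.length ∧ z.b = y.b) ∨
    (y.a.edges <+: x.b.edges ∧
      z.a = x.a ∧ z.b.edges = y.b.edges ++ x.b.edges.drop y.a.edges.length) := by
  obtain ⟨a, b, hab⟩ := x
  obtain ⟨c, d, hcd⟩ := y
  classical
  change (if h : _ then _ else if h' : _ then _ else none) = some z at h
  split_ifs at h with h₁ h₂ <;> cases h
  · exact Or.inl ⟨h₁.2, rfl, rfl⟩
  · exact Or.inr ⟨h₂.2, rfl, rfl⟩

lemma prefix_of_nz_mul_nz_eq_nz {x y z : NZ G} (h : nz x * nz y = nz z) :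
    x.a.edges <+: z.a.edges ∧ y.b.edges <+: z.b.edges := by
  rcases nz_mul_nz_eq_nz h with ⟨-, ha, hb⟩ | ⟨-, ha, hb⟩
  · exact ⟨⟨_, ha.symm⟩, hb ▸ List.prefix_refl _⟩
  · exact ⟨ha ▸ List.prefix_refl _, ⟨_, hb.symm⟩⟩

lemma edges_eq_of_nz_mul_self {m : NZ G} (h : nz m * nz m = nz m) :
    m.a.edges = m.b.edges := by
  rcases nz_mul_nz_eq_nz h with ⟨hp, ha, -⟩ | ⟨hp, -, hb⟩
  · refine (hp.eq_of_length_le ?_).symm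
    have := congrArg List.length ha
    simp only [List.length_append, List.length_drop] at this
    omega
  · refine hp.eq_of_length_le ?_
    have := congrArg List.length hb
    simp only [List.length_append, List.length_drop] at this
    omega

end GIS

open GIS

section Hom

variable (f : GIS G →ₙ* PolyM ι)

lemma map_mul_of_eq {x y z : GIS G} {x' y' z' : GIS (bouquet ι)} (h : x * y = z)
    (hx : f x = x') (hy : f y = y') (hz : f z = z') : x' * y' = z' := by
  rw [← hx, ← hy, ← hz, ← h]
  exact (map_mul f _ _).symm

/-- `c(p)` is read off from the idempotent `f (p p⁻¹) = c(p) c(p)⁻¹`. -/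
lemma exists_injective_map_nz_eq (hf : Function.Injective f) (h0 : f 0 = 0) :
    ∃ c : G.GPath → (bouquet ι).GPath, Function.Injective c ∧
      ∀ n : NZ G, f (nz n) = nz ⟨c n.a, c n.b, bouquet_rng_eq _ _⟩ := by
  have hne : ∀ n : NZ G, ∃ m, f (nz n) = nz m := fun n => by
    rcases hm : f (nz n) with _ | m
    · exact absurd (hf (hm.trans h0.symm)) (nz_ne_zero n)
    · exact ⟨m, rfl⟩
  choose φ hφ using hne
  have hmul : ∀ {x y z : NZ G}, nz x * nz y = nz z →
      (nz (φ x) * nz (φ y) : GIS (bouquet ι)) = nz (φ z) :=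
    fun h => map_mul_of_eq f h (hφ _) (hφ _) (hφ _)
  let e : G.GPath → NZ G := fun p => ⟨p, p, rfl⟩
  have he : ∀ p, (φ (e p)).a.edges = (φ (e p)).b.edges := fun p =>
    edges_eq_of_nz_mul_self (hmul (nz_mul_nz_cancel p p p rfl rfl))
  refine ⟨fun p => (φ (e p)).a, fun p q (hpq : (φ (e p)).a = (φ (e q)).a) => ?_,
    fun ⟨a, b, hab⟩ => ?_⟩
  · have hφpq : φ (e p) = φ (e q) :=
      NZ.ext hpq (bouquet_edges_injective (by rw [← he, ← he, hpq]))
    have : f (nz (e p)) = f (nz (e q)) := by rw [hφ, hφ, hφpq]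
    exact congrArg NZ.a (nz_injective (hf this))
  -- Each path of `f (a b⁻¹)` is a prefix of, and has as a prefix, `c(a)` resp. `c(b)`.
  have h_aa_ab := prefix_of_nz_mul_nz_eq_nz (hmul (nz_mul_nz_cancel a a b rfl hab))
  have h_ab_ba := prefix_of_nz_mul_nz_eq_nz (hmul (nz_mul_nz_cancel a b a hab hab.symm))
  have h_ab_bb := prefix_of_nz_mul_nz_eq_nz (hmul (nz_mul_nz_cancel a b b hab rfl))
  have h_ba_ab := prefix_of_nz_mul_nz_eq_nz (hmul (nz_mul_nz_cancel b a b hab.symm hab))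
  rw [hφ]
  refine congrArg nz (NZ.ext (bouquet_edges_injective ?_) (bouquet_edges_injective ?_))
  · exact h_ab_ba.1.eq_of_length_le h_aa_ab.1.length_le
  · rw [he]
    exact h_ba_ab.2.eq_of_length_le h_ab_bb.2.length_le

/-- Writing `f 0 = u v⁻¹`, the identities `f x · f 0 = f 0 = f 0 · f x` force the paths of
every nonzero `f x` to be prefixes of `u` and of `v`. -/
lemma finite_range_of_map_zero_ne_zero (h0 : f 0 ≠ 0) : (Set.range f).Finite := by
  obtain ⟨w, hw⟩ : ∃ w, f 0 = nz w := Option.ne_none_iff_exists'.mp h0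
  let S : Set (NZ (bouquet ι)) := (fun m => (m.a, m.b)) ⁻¹'
    ({p | p.edges <+: w.a.edges} ×ˢ {p | p.edges <+: w.b.edges})
  have hS : S.Finite :=
    ((finite_setOf_prefix_bouquet _).prod (finite_setOf_prefix_bouquet _)).preimage
      fun _ _ _ _ h => NZ.ext (congrArg Prod.fst h) (congrArg Prod.snd h)
  have hrange : Set.range f ⊆ insert 0 (nz '' S) := by
    rintro _ ⟨x, rfl⟩
    rcases hm : f x with _ | m
    · exact Or.inl rfl
    refine Or.inr ⟨m, ⟨?_, ?_⟩, rfl⟩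
    · exact (prefix_of_nz_mul_nz_eq_nz (map_mul_of_eq f (mul_zero x) hm hw hw)).1
    · exact (prefix_of_nz_mul_nz_eq_nz (map_mul_of_eq f (zero_mul x) hw hm hw)).2
  exact ((hS.image nz).insert 0).subset hrange

end Hom

lemma finite_gpath_of_finite [Finite (GIS G)] : Finite G.GPath :=
  Finite.of_injective (fun p : G.GPath => nz ⟨p, p, rfl⟩) fun _ _ h =>
    congrArg NZ.a (nz_injective h)

section Topology

open Filter Topology

variable {𝓕 : Filter G.GPath}

lemma monotone_UF : Monotone (UF : Set G.GPath → Set (GIS G)) := fun _ _ h => inUF_mono h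

lemma zero_mem_UF (F : Set G.GPath) : (0 : GIS G) ∈ UF F := trivial

lemma isOpen_UF {F : Set G.GPath} (hF : F ∈ 𝓕) : IsOpen[tauF 𝓕] (UF F) :=
  fun _ => ⟨F, hF, subset_rfl⟩

lemma nhds_zero_tauF : @nhds _ (tauF 𝓕) 0 = 𝓕.lift' UF := by
  let := tauF 𝓕
  refine HasBasis.eq_of_same_basis ⟨fun t => ?_⟩ (𝓕.basis_sets.lift' monotone_UF)
  rw [mem_nhds_iff]
  constructor
  · rintro ⟨t', ht't, ht', h0⟩
    obtain ⟨F, hF, hFt'⟩ := ht' h0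
    exact ⟨F, hF, hFt'.trans ht't⟩
  · rintro ⟨F, hF, hFt⟩
    exact ⟨UF F, hFt, isOpen_UF hF, zero_mem_UF F⟩

lemma nhds_tauF_of_ne_zero {x : GIS G} (hx : x ≠ 0) : @nhds _ (tauF 𝓕) x = pure x :=
  let := tauF 𝓕
  (isOpen_singleton_iff_nhds_eq_pure x).mp fun h0 => absurd h0.symm hx

lemma isEmbedding_tauF_comap {𝓕 : Filter H.GPath} {f : GIS G → GIS H}
    (hf : Function.Injective f) (h0 : f 0 = 0) (c : G.GPath → H.GPath)
    (hUF : ∀ F, f ⁻¹' UF F = UF (c ⁻¹' F)) :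
    @IsEmbedding _ _ (tauF (𝓕.comap c)) (tauF 𝓕) f := by
  let := tauF (𝓕.comap c)
  let := tauF 𝓕
  refine ⟨isInducing_iff_nhds.mpr fun x => ?_, hf⟩
  rcases eq_or_ne x 0 with rfl | hx
  · rw [h0, nhds_zero_tauF, nhds_zero_tauF, comap_lift'_eq, comap_lift'_eq2 monotone_UF]
    exact congrArg _ (funext fun F => (hUF F).symm)
  · have hfx : f x ≠ 0 := h0 ▸ hf.ne hx
    rw [nhds_tauF_of_ne_zero hx, nhds_tauF_of_ne_zero hfx, comap_pure, ← Set.image_singleton,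
      hf.preimage_image, principal_singleton]

lemma discreteTopology_tauF_cofinite [Finite G.GPath] :
    @DiscreteTopology (GIS G) (tauF cofinite) := by
  let := tauF (cofinite : Filter G.GPath)
  refine discreteTopology_iff_forall_isOpen.mpr fun s h0 => ⟨∅, ?_, ?_⟩
  · simp only [mem_cofinite, Set.compl_empty, Set.finite_univ]
  · rintro (_ | n) hn
    · exact h0
    · exact absurd hn.1 (Set.notMem_empty _)

lemma t1Space_tauF (h : 𝓕 ≤ cofinite) : @T1Space (GIS G) (tauF 𝓕) := by
  let := tauF 𝓕
  refine ⟨fun x => isOpen_compl_iff.mp fun h0 => ?_⟩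
  rcases x with _ | n
  · exact absurd rfl h0
  · refine ⟨{n.a}ᶜ, h (Set.finite_singleton _).compl_mem_cofinite, fun y hy hyn => ?_⟩
    subst hyn
    exact hy.1 rfl

end Topology

end DiGraph

open DiGraph in
/-- For an arbitrary graph `E` and cardinal `λ`, every injective semigroup
homomorphism `f : G(E) → P_λ` is a topological embedding of
`(G(E), τ_{𝓕_cf})` into `(P_λ, τ_{𝓕_cf})`. -/
theorem injective_hom_isEmbedding_cofinite (G : DiGraph.{u}) (ι : Type u)
    (f : GIS G →ₙ* PolyM ι) (hf : Function.Injective f) :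
    @Topology.IsEmbedding _ _ (tauF (Filter.cofinite : Filter G.GPath))
      (tauF (Filter.cofinite : Filter (bouquet ι).GPath)) f := by
  by_cases h0 : f 0 = 0
  · obtain ⟨c, hc, hfc⟩ := exists_injective_map_nz_eq f hf h0
    rw [← hc.comap_cofinite_eq]
    refine isEmbedding_tauF_comap hf h0 c fun F => Set.ext fun x => ?_
    rcases x with _ | n
    · exact iff_of_true (show f 0 ∈ UF F from h0 ▸ zero_mem_UF F) (zero_mem_UF _)
    · exact Iff.of_eq (congrArg (· ∈ UF F) (hfc n))
  · have hr := finite_range_of_map_zero_ne_zero f h0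
    have := hr.to_subtype
    have := Finite.of_injective_finite_range hf
    have := finite_gpath_of_finite (G := G)
    exact @isEmbedding_of_injective_of_finite_range _ _ (tauF _) discreteTopology_tauF_cofinite
      (tauF _) (t1Space_tauF le_rfl) _ hf hr
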